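/- arXiv:2305.19475 — 2 statements merged into one kernel-verified Lean document; each statement's English description precedes it below -/
import Mathlib

section
/- Let x_frac, x_integ : Q × C → ℝ with x_frac taking values in [0,1] and x_integ taking values in {0,1}. Suppose for constants α, β ∈ ℝ with 0 ≤ β ≤ α ≤ 1 and ρ ≥ 0, and a subset C_h ⊆ C, the fractional solution satisfies for every q: β·(∑_{j∈C} x_frac(q,j)) − ρ ≤ ∑_{j∈C_h} x_frac(q,j) ≤ α·(∑_{j∈C} x_frac(q,j)) + ρ. If additionally for every q: ⌊∑_{j∈C} x_frac(q,j)⌋ ≤ ∑_{j∈C} x_integ(q,j) ≤ ⌈∑_{j∈C} x_frac(q,j)⌉ and ⌊∑_{j∈C_h} x_frac(q,j)⌋ ≤ ∑_{j∈C_h} x_integ(q,j) ≤ ⌈∑_{j∈C_h} x_frac(q,j)⌉, then for every q: β·(∑_{j∈C} x_integ(q,j)) − (ρ+2) ≤ ∑_{j∈C_h} x_integ(q,j) ≤ α·(∑_{j∈C} x_integ(q,j)) + (ρ+2). -/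
/-!
Rounding moves each of the two sums by less than one, and an affine bound `c * F ± ρ` with
`0 ≤ c ≤ 1` loses at most `2δ` of slack when both of its sides are moved by at most `δ`.
-/

lemma abs_sub_le_one_of_floor_le_of_le_ceil {x y : ℝ} (hfloor : (⌊x⌋ : ℝ) ≤ y)
    (hceil : y ≤ (⌈x⌉ : ℝ)) : |y - x| ≤ 1 := by
  have := Int.sub_one_lt_floor x
  have := Int.ceil_lt_add_one x
  rw [abs_sub_le_iff]
  constructor <;> linarith

section Perturbation

variable {c ρ δ F Fh I Ih : ℝ}

lemma sub_le_of_abs_sub_le_of_mul_sub_le (hc₀ : 0 ≤ c) (hc₁ : c ≤ 1)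
    (hI : |I - F| ≤ δ) (hIh : |Ih - Fh| ≤ δ) (h : c * F - ρ ≤ Fh) :
    c * I - (ρ + 2 * δ) ≤ Ih := by
  have hδ : 0 ≤ δ := (abs_nonneg _).trans hI
  rw [abs_sub_le_iff] at hI hIh
  have := mul_le_mul_of_nonneg_left (show I ≤ F + δ by linarith) hc₀
  have := mul_le_mul_of_nonneg_right hc₁ hδ
  linarith

lemma le_add_of_abs_sub_le_of_le_mul_add (hc₀ : 0 ≤ c) (hc₁ : c ≤ 1)
    (hI : |I - F| ≤ δ) (hIh : |Ih - Fh| ≤ δ) (h : Fh ≤ c * F + ρ) :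
    Ih ≤ c * I + (ρ + 2 * δ) := by
  have hδ : 0 ≤ δ := (abs_nonneg _).trans hI
  rw [abs_sub_le_iff] at hI hIh
  have := mul_le_mul_of_nonneg_left (show F - δ ≤ I by linarith) hc₀
  have := mul_le_mul_of_nonneg_right hc₁ hδ
  linarith

end Perturbation

theorem integ_is_sandwiched_general {Q C : Type*} [Fintype C]
    (Ch : Finset C)
    (xfrac xinteg : Q × C → ℝ)
    (α β ρ : ℝ) (hβ : 0 ≤ β) (hβα : β ≤ α) (hα : α ≤ 1)
    (hGF : ∀ q : Q,
      β * (∑ j : C, xfrac (q, j)) - ρ ≤ ∑ j ∈ Ch, xfrac (q, j) ∧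
      ∑ j ∈ Ch, xfrac (q, j) ≤ α * (∑ j : C, xfrac (q, j)) + ρ)
    (hsand1 : ∀ q : Q,
      (⌊∑ j : C, xfrac (q, j)⌋ : ℝ) ≤ ∑ j : C, xinteg (q, j) ∧
      ∑ j : C, xinteg (q, j) ≤ (⌈∑ j : C, xfrac (q, j)⌉ : ℝ))
    (hsand2 : ∀ q : Q,
      (⌊∑ j ∈ Ch, xfrac (q, j)⌋ : ℝ) ≤ ∑ j ∈ Ch, xinteg (q, j) ∧
      ∑ j ∈ Ch, xinteg (q, j) ≤ (⌈∑ j ∈ Ch, xfrac (q, j)⌉ : ℝ)) :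
    ∀ q : Q,
      β * (∑ j : C, xinteg (q, j)) - (ρ + 2) ≤ ∑ j ∈ Ch, xinteg (q, j) ∧
      ∑ j ∈ Ch, xinteg (q, j) ≤ α * (∑ j : C, xinteg (q, j)) + (ρ + 2) := by
  intro q
  have hI := abs_sub_le_one_of_floor_le_of_le_ceil (hsand1 q).1 (hsand1 q).2
  have hIh := abs_sub_le_one_of_floor_le_of_le_ceil (hsand2 q).1 (hsand2 q).2
  have hlower := sub_le_of_abs_sub_le_of_mul_sub_le hβ (hβα.trans hα) hI hIh (hGF q).1
  have hupper := le_add_of_abs_sub_le_of_le_mul_add (hβ.trans hβα) hα hI hIh (hGF q).2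
  rw [mul_one] at hlower hupper
  exact ⟨hlower, hupper⟩

theorem integ_is_sandwiched {Q C : Type*} [Fintype Q] [Fintype C] [DecidableEq C]
    (Ch : Finset C)
    (xfrac xinteg : Q × C → ℝ)
    (hfrac : ∀ p, 0 ≤ xfrac p ∧ xfrac p ≤ 1)
    (hinteg : ∀ p, xinteg p = 0 ∨ xinteg p = 1)
    (α β ρ : ℝ) (hβ : 0 ≤ β) (hβα : β ≤ α) (hα : α ≤ 1) (hρ : 0 ≤ ρ)
    (hGF : ∀ q : Q,
      β * (∑ j : C, xfrac (q, j)) - ρ ≤ ∑ j ∈ Ch, xfrac (q, j) ∧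
      ∑ j ∈ Ch, xfrac (q, j) ≤ α * (∑ j : C, xfrac (q, j)) + ρ)
    (hsand1 : ∀ q : Q,
      (⌊∑ j : C, xfrac (q, j)⌋ : ℝ) ≤ ∑ j : C, xinteg (q, j) ∧
      ∑ j : C, xinteg (q, j) ≤ (⌈∑ j : C, xfrac (q, j)⌉ : ℝ))
    (hsand2 : ∀ q : Q,
      (⌊∑ j ∈ Ch, xfrac (q, j)⌋ : ℝ) ≤ ∑ j ∈ Ch, xinteg (q, j) ∧
      ∑ j ∈ Ch, xinteg (q, j) ≤ (⌈∑ j ∈ Ch, xfrac (q, j)⌉ : ℝ)) :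
    ∀ q : Q,
      β * (∑ j : C, xinteg (q, j)) - (ρ + 2) ≤ ∑ j ∈ Ch, xinteg (q, j) ∧
      ∑ j ∈ Ch, xinteg (q, j) ≤ α * (∑ j : C, xinteg (q, j)) + (ρ + 2) :=
  integ_is_sandwiched_general Ch xfrac xinteg α β ρ hβ hβα hα hGF hsand1 hsand2
end

section
/- In the k-community instance with k ≥ 3 all-blue communities except one community containing only red and green points, any choice of k centers that includes at least one red and at least one green center uses at most k−2 blue centers; hence by pigeonhole some all-blue community contains no center, and every point of that community is at distance ≥ R from its assigned center, so the clustering cost is at least R. -/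
/-!
The red and the green center are two distinct non-blue centers, so at most `k - 2` of the
at most `k` centers are blue. Blue points are exactly the points of the first `k - 1`
communities, so these `k - 2` blue centers miss one of them by pigeonhole. Every point of
that community is assigned to a center in another community, hence at distance `≥ R`.
-/

theorem Finset.card_filter_add_two_le {α : Type*} {s : Finset α} (p : α → Prop)
    [DecidablePred p] {a b : α} (ha : a ∈ s) (hb : b ∈ s) (hab : a ≠ b)
    (hpa : ¬p a) (hpb : ¬p b) : (s.filter p).card + 2 ≤ s.card := by
  have htwo : 1 < (s.filter (¬p ·)).card :=
    Finset.one_lt_card_iff.2 ⟨a, b, by simpa [ha], by simpa [hb], hab⟩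
  have := Finset.card_filter_add_card_filter_not (s := s) p
  omega

theorem Finset.exists_lt_forall_ne_of_card_lt {α : Type*} {s : Finset α} (f : α → ℕ)
    {m : ℕ} (hs : s.card < m) : ∃ n < m, ∀ a ∈ s, f a ≠ n := by
  classical
  have hlt : (s.image f).card < (Finset.range m).card :=
    (Finset.card_image_le).trans_lt (by simpa using hs)
  obtain ⟨n, hn, hnotMem⟩ := Finset.exists_mem_notMem_of_card_lt_card hlt
  exact ⟨n, Finset.mem_range.1 hn, fun a ha han => hnotMem (han ▸ Finset.mem_image_of_mem f ha)⟩

theorem color_eq_zero_iff_val_lt {X : Type*} {k : ℕ} {comm : X → Fin k} {color : X → Fin 3}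
    (hblue : ∀ x : X, (comm x).val < k - 1 → color x = 0)
    (hlast : ∀ x : X, (comm x).val = k - 1 → color x ≠ 0) (x : X) :
    color x = 0 ↔ (comm x).val < k - 1 := by
  refine ⟨fun h => ?_, hblue x⟩
  have := (comm x).isLt
  have := mt (hlast x) (not_not.2 h)
  omega

theorem ds_unbounded_pof_general {X : Type*} [PseudoMetricSpace X]
    (k : ℕ)
    (comm : X → Fin k) (color : X → Fin 3)
    (hblue : ∀ x : X, (comm x).val < k - 1 → color x = 0)
    (hlast : ∀ x : X, (comm x).val = k - 1 → color x ≠ 0)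
    (hnonempty : ∀ t : Fin k, ∃ x : X, comm x = t)
    (R : ℝ)
    (hdistR : ∀ x y : X, comm x ≠ comm y → R ≤ dist x y)
    (S : Finset X) (hScard : S.card ≤ k)
    (hred : ∃ s ∈ S, color s = 1) (hgreen : ∃ s ∈ S, color s = 2)
    (φ : X → X) (hφ : ∀ x, φ x ∈ S) :
    ((S.filter (fun s => color s = 0)).card ≤ k - 2) ∧
    (∃ t : Fin k, t.val < k - 1 ∧ ∀ s ∈ S, comm s ≠ t) ∧
    ∃ x : X, R ≤ dist x (φ x) := by
  obtain ⟨r, hrS, hr⟩ := hred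
  obtain ⟨g, hgS, hg⟩ := hgreen
  have hblueCard := S.card_filter_add_two_le (color · = 0) hrS hgS
    (by rintro rfl; simp [hr] at hg) (by simp [hr]) (by simp [hg])
  obtain ⟨n, hn, hmiss⟩ := Finset.exists_lt_forall_ne_of_card_lt (fun s => (comm s).val)
    (show (S.filter (color · = 0)).card < k - 1 by omega)
  have hempty : ∀ s ∈ S, comm s ≠ ⟨n, by omega⟩ := by
    intro s hs hst
    have hsn : (comm s).val = n := congrArg Fin.val hst
    have hsBlue : color s = 0 := (color_eq_zero_iff_val_lt hblue hlast s).2 (hsn ▸ hn)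
    exact hmiss s (Finset.mem_filter.2 ⟨hs, hsBlue⟩) hsn
  obtain ⟨x, hx⟩ := hnonempty ⟨n, by omega⟩
  refine ⟨by omega, ⟨_, hn, hempty⟩, x, hdistR x (φ x) ?_⟩
  rw [hx]
  exact (hempty (φ x) (hφ x)).symm

/-- The `k`-community instance where all but the last community are blue and the
last community has only red and green points: any choice of at most `k` centers
containing a red center and a green center leaves some all-blue community with no
center, forcing clustering cost at least `R`. Colors: `0` = blue, `1` = red,
`2` = green. -/
theorem ds_unbounded_pof {X : Type*} [PseudoMetricSpace X] [Fintype X] [DecidableEq X]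
    (k : ℕ) (hk : 3 ≤ k)
    (comm : X → Fin k) (color : X → Fin 3)
    (hblue : ∀ x : X, (comm x).val < k - 1 → color x = 0)
    (hlast : ∀ x : X, (comm x).val = k - 1 → color x ≠ 0)
    (hnonempty : ∀ t : Fin k, ∃ x : X, comm x = t)
    (R : ℝ) (hR : 0 < R)
    (hdist0 : ∀ x y : X, comm x = comm y → dist x y = 0)
    (hdistR : ∀ x y : X, comm x ≠ comm y → R ≤ dist x y)
    (S : Finset X) (hScard : S.card ≤ k)
    (hred : ∃ s ∈ S, color s = 1) (hgreen : ∃ s ∈ S, color s = 2)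
    (φ : X → X) (hφ : ∀ x, φ x ∈ S) :
    ((S.filter (fun s => color s = 0)).card ≤ k - 2) ∧
    (∃ t : Fin k, t.val < k - 1 ∧ ∀ s ∈ S, comm s ≠ t) ∧
    ∃ x : X, R ≤ dist x (φ x) :=
  ds_unbounded_pof_general k comm color hblue hlast hnonempty R hdistR S hScard hred hgreen φ hφ
end
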